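/- arXiv:1009.6076 — 4 statements merged into one kernel-verified Lean document; each statement's English description precedes it below -/
import Mathlib

section
/- Let Γ be a cancellative monoid satisfying the right common multiple condition CM_r: for any u, v ∈ Γ there exist a, b ∈ Γ with a·u = b·v. Let U₀,…,Uₙ and V₀,…,Vₙ be sequences in Γ such that for each i = 1,…,n there exists αᵢ in a generating set G with either (Uᵢ₋₁αᵢ = Uᵢ and Vᵢ₋₁αᵢ = Vᵢ) or (Uᵢαᵢ = Uᵢ₋₁ and Vᵢαᵢ = Vᵢ₋₁). If U₀ = Uₙ then V₀ = Vₙ. -/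
/-- Lemma 1: a cancellative monoid satisfying the right common multiple condition CM_r
satisfies Assumption H: for any two sequences connected by edges of the same labels
(with respect to a finite generating set `G`), `U₀ = Uₙ` implies `V₀ = Vₙ`. -/
theorem stmt_4 {M : Type*} [CancelMonoid M] (G : Finset M)
    (hgen : ∀ g : M, ∃ w : List M, (∀ x ∈ w, x ∈ G) ∧ w.prod = g)
    (hCMr : ∀ u v : M, ∃ a b : M, a * u = b * v)
    (n : ℕ) (U V : ℕ → M)
    (hedge : ∀ i, 1 ≤ i → i ≤ n → ∃ α ∈ G,
      (U (i - 1) * α = U i ∧ V (i - 1) * α = V i) ∨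
      (U i * α = U (i - 1) ∧ V i * α = V (i - 1)))
    (hU : U 0 = U n) : V 0 = V n := by
  obtain ⟨a, b, hab⟩ := hCMr (U 0) (V 0)
  have key : ∀ i, i ≤ n → a * U i = b * V i := by
    intro i
    induction i with
    | zero => intro _; exact hab
    | succ k ih =>
      intro hk
      obtain ⟨α, _, h | h⟩ := hedge (k + 1) (Nat.le_add_left 1 k) hk
      · simp only [Nat.add_sub_cancel] at h
        calc a * U (k + 1) = a * U k * α := by rw [← h.1, mul_assoc]
          _ = b * V k * α := by rw [ih (Nat.le_of_succ_le hk)]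
          _ = b * V (k + 1) := by rw [mul_assoc, h.2]
      · simp only [Nat.add_sub_cancel] at h
        have hk' := ih (Nat.le_of_succ_le hk)
        rw [← h.1, ← h.2, ← mul_assoc, ← mul_assoc] at hk'
        exact mul_right_cancel hk'
  have := key n le_rfl
  rw [← hU, hab] at this
  exact mul_left_cancel this
end

section
/- Let Γ be a cancellative monoid with additive length function l with respect to a finite generating set G, satisfying GCD_l and CM_r (i.e., Γ is of class 𝒞). Let S₀ be a finite subset of Γ with gcd_l(S₀) = e. If g, h ∈ Γ satisfy g·S₀ = h·S₀ (as sets), then g = h. -/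
/-- `d` left-divides `u`. -/
def LeftDvd {M : Type*} [Monoid M] (d u : M) : Prop := ∃ x : M, u = d * x

lemma leftDvd_trans {M : Type*} [Monoid M] {a b c : M} (h1 : LeftDvd a b)
    (h2 : LeftDvd b c) : LeftDvd a c := by
  obtain ⟨x, rfl⟩ := h1
  obtain ⟨y, rfl⟩ := h2
  exact ⟨x * y, mul_assoc _ _ _⟩

lemma finset_gcd {M : Type*} [Monoid M]
    (hGCDl : ∀ u v : M, ∃ d : M, LeftDvd d u ∧ LeftDvd d v ∧
      ∀ w : M, LeftDvd w u → LeftDvd w v → LeftDvd w d)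
    (S : Finset M) (hS : S.Nonempty) :
    ∃ d : M, (∀ s ∈ S, LeftDvd d s) ∧ ∀ w : M, (∀ s ∈ S, LeftDvd w s) → LeftDvd w d := by
  induction hS using Finset.Nonempty.cons_induction with
  | singleton a =>
      refine ⟨a, ?_, ?_⟩
      · intro s hs; rw [Finset.mem_singleton] at hs; subst hs; exact ⟨1, (mul_one _).symm⟩
      · intro w hw; exact hw a (Finset.mem_singleton_self a)
  | cons a s ha hs ih =>
      obtain ⟨d', hd'1, hd'2⟩ := ih
      obtain ⟨d, hda, hdd', hdmax⟩ := hGCDl a d'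
      refine ⟨d, ?_, ?_⟩
      · intro t ht
        rcases Finset.mem_cons.mp ht with rfl | ht
        · exact hda
        · exact leftDvd_trans hdd' (hd'1 t ht)
      · intro w hw
        exact hdmax w (hw a (Finset.mem_cons_self a s))
          (hd'2 w (fun t ht => hw t (Finset.mem_cons.mpr (Or.inr ht))))

/-- For a monoid of class 𝒞 (cancellative, homogeneous with respect to a finite
generating set, with GCD_l and CM_r), if `S₀` is a finite nonempty subset with
`gcd_l(S₀) = e`, then `g·S₀ = h·S₀` implies `g = h`. -/
theorem stmt_7 {M : Type*} [CancelMonoid M] [DecidableEq M] (G : Finset M)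
    (hgen : ∀ g : M, ∃ w : List M, (∀ x ∈ w, x ∈ G) ∧ w.prod = g)
    (l : M → ℕ)
    (hl : ∀ g : M, l g =
      sInf {n : ℕ | ∃ w : List M, (∀ x ∈ w, x ∈ G) ∧ w.length = n ∧ w.prod = g})
    (hadd : ∀ g h : M, l (g * h) = l g + l h)
    (hGCDl : ∀ u v : M, ∃! d : M, LeftDvd d u ∧ LeftDvd d v ∧
      ∀ w : M, LeftDvd w u → LeftDvd w v → LeftDvd w d)
    (hCMr : ∀ u v : M, ∃ a b : M, a * u = b * v)
    (S₀ : Finset M) (hS₀ : S₀.Nonempty)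
    (hgcd : ∀ w : M, (∀ s ∈ S₀, LeftDvd w s) → w = 1)
    (g h : M)
    (heq : S₀.image (fun s => g * s) = S₀.image (fun s => h * s)) :
    g = h := by
  obtain ⟨d, hd1, hd2⟩ := finset_gcd (fun u v => (hGCDl u v).exists)
    (S₀.image (fun s => g * s)) (hS₀.image _)
  -- g divides d
  obtain ⟨x, hx⟩ : LeftDvd g d := by
    apply hd2
    intro t ht
    obtain ⟨s, _, rfl⟩ := Finset.mem_image.mp ht
    exact ⟨s, rfl⟩
  -- h divides d
  obtain ⟨y, hy⟩ : LeftDvd h d := by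
    apply hd2
    intro t ht
    rw [heq] at ht
    obtain ⟨s, _, rfl⟩ := Finset.mem_image.mp ht
    exact ⟨s, rfl⟩
  -- x is a common left divisor of S₀
  have hx1 : x = 1 := by
    apply hgcd
    intro s hs
    obtain ⟨z, hz⟩ := hd1 (g * s) (Finset.mem_image_of_mem _ hs)
    rw [hx, mul_assoc] at hz
    exact ⟨z, mul_left_cancel hz⟩
  -- y is a common left divisor of S₀
  have hy1 : y = 1 := by
    apply hgcd
    intro s hs
    have : h * s ∈ S₀.image (fun s => g * s) := heq ▸ Finset.mem_image_of_mem _ hs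
    obtain ⟨z, hz⟩ := hd1 (h * s) this
    rw [hy, mul_assoc] at hz
    exact ⟨z, mul_left_cancel hz⟩
  rw [hx1, mul_one] at hx
  rw [hy1, mul_one] at hy
  rw [← hx, ← hy]
end

section
/- Let (aₙ) be a sequence of positive reals with a₀ = 1 such that every coefficientwise accumulation point of the polynomials Xₙ(s) = Σ_{k=0}^n (a_{n−k}/aₙ)sᵏ has positive coefficient of s. Then the map τ sending Σ cₖsᵏ (with c₁ ≠ 0) to (1/c₁)·Σ c_{k+1}sᵏ maps the accumulation set Ω into itself. -/
open Filter

/-!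
Writing `Xₙ` for the `n`-th opposite polynomial, one has `τ Xₙ₊₁ = Xₙ` on the nose. Since `τ` is
continuous for the product topology at every series with nonzero linear coefficient, a cluster
point `x` of `(Xₙ₊₁)` is sent to a cluster point `τ x` of `(τ Xₙ₊₁) = (Xₙ)`.
-/

noncomputable def oppositePoly (a : ℕ → ℝ) (n : ℕ) : ℕ → ℝ :=
  fun k => if k ≤ n then a (n - k) / a n else 0

noncomputable def shiftNormalize (x : ℕ → ℝ) : ℕ → ℝ :=
  fun k => x (k + 1) / x 1

theorem continuousAt_shiftNormalize {x : ℕ → ℝ} (hx : x 1 ≠ 0) :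
    ContinuousAt shiftNormalize x :=
  continuousAt_pi.2 fun k =>
    (continuous_apply (k + 1)).continuousAt.div (continuous_apply 1).continuousAt hx

theorem shiftNormalize_oppositePoly_succ {a : ℕ → ℝ} {n : ℕ} (ha : a (n + 1) ≠ 0) :
    shiftNormalize (oppositePoly a (n + 1)) = oppositePoly a n := by
  funext k
  simp only [shiftNormalize, oppositePoly, Nat.add_sub_add_right, Nat.le_add_left,
    add_le_add_iff_right]
  split_ifs
  · exact div_div_div_cancel_right₀ ha _ _
  · exact zero_div _

theorem MapClusterPt.comp_succ {X : Type*} [TopologicalSpace X] {x : X} {u : ℕ → X}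
    (hu : MapClusterPt x atTop u) : MapClusterPt x atTop (fun n => u (n + 1)) := by
  rwa [← Function.comp_def, mapClusterPt_comp, map_add_atTop_eq_nat]

theorem stmt_13_general (a : ℕ → ℝ) (hpos : ∀ n, 0 < a n)
    (Ω : Set (ℕ → ℝ))
    (hΩ : Ω = {x : ℕ → ℝ | MapClusterPt x atTop
      (fun n k => if k ≤ n then a (n - k) / a n else 0)})
    (hlin : ∀ x ∈ Ω, 0 < x 1) :
    ∀ x ∈ Ω, (fun k => x (k + 1) / x 1) ∈ Ω := by
  intro x hx
  have hx1 : x 1 ≠ 0 := (hlin x hx).ne'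
  subst hΩ
  have hshift : MapClusterPt x atTop (fun n => oppositePoly a (n + 1)) :=
    MapClusterPt.comp_succ hx
  have himage := hshift.continuousAt_comp (continuousAt_shiftNormalize hx1)
  have hτ : shiftNormalize ∘ (fun n => oppositePoly a (n + 1)) = oppositePoly a :=
    funext fun n => shiftNormalize_oppositePoly_succ (hpos (n + 1)).ne'
  rwa [hτ] at himage

/-- If every accumulation point of the sequence of opposite polynomials of a positive
sequence `(aₙ)` with `a₀ = 1` has positive coefficient of `s`, then the
shift-and-renormalize operator `τ : Σ cₖsᵏ ↦ (1/c₁)·Σ c_{k+1}sᵏ` maps the accumulation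
set `Ω` into itself. -/
theorem stmt_13 (a : ℕ → ℝ) (hpos : ∀ n, 0 < a n) (h0 : a 0 = 1)
    (Ω : Set (ℕ → ℝ))
    (hΩ : Ω = {x : ℕ → ℝ | MapClusterPt x atTop
      (fun n k => if k ≤ n then a (n - k) / a n else 0)})
    (hlin : ∀ x ∈ Ω, 0 < x 1) :
    ∀ x ∈ Ω, (fun k => x (k + 1) / x 1) ∈ Ω :=
  stmt_13_general a hpos Ω hΩ hlin
end

section
/- The braid monoid B(3)⁺ on 3 strands (the Artin monoid of type A₂, generated by a, b with relation aba = bab) is cancellative, homogeneous with respect to {a,b}, and any two elements admit a common right multiple; in particular the fundamental element Δ = aba satisfies: for every generator g ∈ {a,b}, g left-divides Δ and g right-divides Δ. -/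
/-!
Every element of `B(3)⁺` is `Δ ^ t * w` for a word `w` containing neither `aba` nor `bab`, and
left multiplication by a generator can be computed on such pairs `(t, w)`: since
`σ g * Δ ^ t = Δ ^ t * σ (g + t)`, one prepends the letter `c = g + t` to `w`, and if this creates
the factor `c (c+1) c = Δ`, it is absorbed into the power. Each generator acts injectively on
these pairs (the first letter of the result tells whether a `Δ` was absorbed), and the orbit of
`(0, [])` recovers the element, which gives left cancellativity. Reversing words respects the
palindromic relation, giving right cancellativity. Finally `Δ ^ 2` is central and every generator
right-divides `Δ`, so every element right-divides a power of `Δ`.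
-/

/-- The braid relation `aba = bab` on the free monoid on two letters. -/
def braidRel : FreeMonoid (Fin 2) → FreeMonoid (Fin 2) → Prop := fun x y =>
  x = FreeMonoid.of 0 * FreeMonoid.of 1 * FreeMonoid.of 0 ∧
  y = FreeMonoid.of 1 * FreeMonoid.of 0 * FreeMonoid.of 1

/-- The positive braid monoid `B(3)⁺ = ⟨a, b ∣ aba = bab⟩` on three strands. -/
def B3 : Type := (conGen braidRel).Quotient

instance : Monoid B3 := Con.monoid _

/-- The standard generators `a`, `b` of `B(3)⁺`. -/
def σ (i : Fin 2) : B3 := (conGen braidRel).mk' (FreeMonoid.of i)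

open Fin.NatCast

namespace B3

theorem σ_braid : σ 0 * σ 1 * σ 0 = σ 1 * σ 0 * σ 1 :=
  (Con.eq _).2 <| ConGen.Rel.of _ _ ⟨rfl, rfl⟩

@[elab_as_elim]
theorem induction_on {p : B3 → Prop} (x : B3) (one : p 1)
    (mul : ∀ g y, p y → p (σ g * y)) : p x := by
  induction x using Con.induction_on with
  | _ w =>
    induction w using FreeMonoid.inductionOn' with
    | one => exact one
    | of_mul g w hw => exact mul g _ hw

def lift {M : Type*} [Monoid M] (f : Fin 2 → M) (h : f 0 * f 1 * f 0 = f 1 * f 0 * f 1) :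
    B3 →* M :=
  (conGen braidRel).lift (FreeMonoid.lift f) <| Con.conGen_le.2 fun _ _ ⟨hx, hy⟩ => by
    subst hx hy
    simpa [Con.ker_rel] using h

@[simp]
theorem lift_σ {M : Type*} [Monoid M] (f : Fin 2 → M) (h : f 0 * f 1 * f 0 = f 1 * f 0 * f 1)
    (i : Fin 2) : lift f h (σ i) = f i :=
  (Con.lift_mk' _ _).trans (FreeMonoid.lift_eval_of _ _)

def delta : B3 := σ 0 * σ 1 * σ 0

local notation "Δ" => delta

theorem σ_mul_σ_add_one_mul_σ (c : Fin 2) : σ c * σ (c + 1) * σ c = Δ := by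
  fin_cases c
  · rfl
  · exact σ_braid.symm

theorem exists_delta_eq_σ_mul (c : Fin 2) : ∃ x, Δ = σ c * x :=
  ⟨σ (c + 1) * σ c, by rw [← σ_mul_σ_add_one_mul_σ, mul_assoc]⟩

theorem exists_delta_eq_mul_σ (c : Fin 2) : ∃ x, Δ = x * σ c :=
  ⟨σ c * σ (c + 1), (σ_mul_σ_add_one_mul_σ c).symm⟩

theorem σ_mul_delta (c : Fin 2) : σ c * Δ = Δ * σ (c + 1) := by
  conv_lhs => rw [← σ_mul_σ_add_one_mul_σ (c + 1), show c + 1 + 1 = c by omega]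
  simp only [← σ_mul_σ_add_one_mul_σ c, mul_assoc]

theorem σ_mul_delta_pow (c : Fin 2) (t : ℕ) : σ c * Δ ^ t = Δ ^ t * σ (c + t) := by
  induction t generalizing c with
  | zero => simp
  | succ t ih =>
    rw [pow_succ', ← mul_assoc, σ_mul_delta, mul_assoc, ih, ← mul_assoc, Nat.cast_succ,
      add_comm (t : Fin 2), add_assoc]

theorem commute_delta_sq (x : B3) : Commute x (Δ ^ 2) := by
  induction x using induction_on with
  | one => exact Commute.one_left _
  | mul g y hy =>
    refine Commute.mul_left ?_ hy
    rw [Commute, SemiconjBy, σ_mul_delta_pow, show g + ((2 : ℕ) : Fin 2) = g by simp]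

theorem exists_mul_eq_delta_pow (u : B3) : ∃ p : B3, ∃ n : ℕ, p * u = Δ ^ n := by
  induction u using induction_on with
  | one => exact ⟨1, 0, by simp⟩
  | mul g w ih =>
    obtain ⟨p, n, hp⟩ := ih
    obtain ⟨r, hr⟩ := exists_delta_eq_mul_σ g
    refine ⟨p * Δ * r, n + 2, ?_⟩
    calc p * Δ * r * (σ g * w) = p * Δ ^ 2 * w := by
          rw [pow_two, hr]
          simp only [mul_assoc]
      _ = Δ ^ 2 * (p * w) := by rw [(commute_delta_sq p).eq, mul_assoc]
      _ = Δ ^ (n + 2) := by rw [hp, ← pow_add, add_comm]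

theorem exists_mul_eq_mul (u v : B3) : ∃ p q : B3, p * u = q * v := by
  obtain ⟨p, m, hp⟩ := exists_mul_eq_delta_pow u
  obtain ⟨q, n, hq⟩ := exists_mul_eq_delta_pow v
  exact ⟨Δ ^ n * p, Δ ^ m * q, by rw [mul_assoc, hp, mul_assoc, hq, ← pow_add, ← pow_add, add_comm]⟩

def length : B3 →* Multiplicative ℕ := lift (fun _ => Multiplicative.ofAdd 1) rfl

@[simp]
theorem length_σ (i : Fin 2) : length (σ i) = Multiplicative.ofAdd 1 := lift_σ _ _ i

def reverse : B3 →* B3ᵐᵒᵖ :=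
  lift (fun i => MulOpposite.op (σ i)) (by simp only [← MulOpposite.op_mul, ← mul_assoc, σ_braid])

@[simp]
theorem reverse_σ (i : Fin 2) : reverse (σ i) = MulOpposite.op (σ i) := lift_σ _ _ i

theorem unop_reverse_unop_reverse (x : B3) : (reverse (reverse x).unop).unop = x := by
  induction x using induction_on with
  | one => simp
  | mul g y hy => simp [hy]

def Reduced (w : List (Fin 2)) : Prop := ∀ c : Fin 2, ¬[c, c + 1, c] <:+: w

theorem reduced_nil : Reduced [] := fun c h => by simp at h

theorem Reduced.drop {w : List (Fin 2)} (hw : Reduced w) (n : ℕ) : Reduced (w.drop n) :=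
  fun c h => hw c (h.trans (List.drop_suffix n w).isInfix)

theorem Reduced.cons {c : Fin 2} {w : List (Fin 2)} (hw : Reduced w) (h : ¬[c + 1, c] <+: w) :
    Reduced (c :: w) := by
  intro d hd
  rcases List.infix_cons_iff.1 hd with hd | hd
  · obtain ⟨rfl, hd'⟩ := List.cons_prefix_cons.1 hd
    exact h hd'
  · exact hw d hd

theorem Reduced.not_prefix {c : Fin 2} {s : List (Fin 2)} (hw : Reduced ((c + 1) :: c :: s)) :
    ¬[c + 1] <+: s := by
  intro h
  apply hw (c + 1)
  rw [show c + 1 + 1 = c by omega]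
  exact (List.cons_prefix_cons.2 ⟨rfl, List.cons_prefix_cons.2 ⟨rfl, h⟩⟩).isInfix

def mulGen (g : Fin 2) (p : ℕ × List (Fin 2)) : ℕ × List (Fin 2) :=
  if [g + p.1 + 1, g + p.1] <+: p.2 then (p.1 + 1, p.2.drop 2) else (p.1, (g + p.1) :: p.2)

section mulGen

variable {g c : Fin 2} {t : ℕ}

theorem mulGen_cons_cons (hc : g + t = c) (s : List (Fin 2)) :
    mulGen g (t, (c + 1) :: c :: s) = (t + 1, s) := by
  subst hc
  simp [mulGen]

theorem mulGen_of_not_prefix {w : List (Fin 2)} (hc : g + t = c) (h : ¬[c + 1, c] <+: w) :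
    mulGen g (t, w) = (t, c :: w) := by
  subst hc
  exact if_neg h

end mulGen

theorem Reduced.mulGen (g : Fin 2) {p : ℕ × List (Fin 2)} (hp : Reduced p.2) :
    Reduced (mulGen g p).2 := by
  unfold B3.mulGen
  split_ifs with h
  · exact hp.drop 2
  · exact hp.cons h

def eval (p : ℕ × List (Fin 2)) : B3 := Δ ^ p.1 * (p.2.map σ).prod

theorem eval_mulGen (g : Fin 2) (p : ℕ × List (Fin 2)) : eval (mulGen g p) = σ g * eval p := by
  obtain ⟨t, w⟩ := p
  change _ = σ g * (Δ ^ t * (w.map σ).prod)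
  rw [← mul_assoc, σ_mul_delta_pow, mul_assoc]
  by_cases h : [g + t + 1, g + t] <+: w
  · obtain ⟨s, rfl⟩ := h
    simp only [List.cons_append, List.nil_append, mulGen_cons_cons rfl, eval, List.map_cons,
      List.prod_cons, pow_succ, ← σ_mul_σ_add_one_mul_σ (g + t), mul_assoc]
  · simp [mulGen_of_not_prefix rfl h, eval]

theorem mulGen_braid (g : Fin 2) (t : ℕ) {w : List (Fin 2)} (hw : Reduced w) :
    mulGen g (mulGen (g + 1) (mulGen g (t, w))) = (t + 1, w) := by
  obtain ⟨c, hc⟩ : ∃ c, g + (t : Fin 2) = c := ⟨_, rfl⟩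
  have hc₁ : g + 1 + (t : Fin 2) = c + 1 := by rw [← hc]; omega
  have hc₂ : g + ((t + 1 : ℕ) : Fin 2) = c + 1 := by rw [← hc]; push_cast; omega
  have hc₃ : g + 1 + ((t + 1 : ℕ) : Fin 2) = c := by rw [← hc]; push_cast; omega
  have hcc : c + 1 + 1 = c := by omega
  by_cases h₁ : [c + 1, c] <+: w
  · obtain ⟨s, rfl⟩ := h₁
    simp only [List.cons_append, List.nil_append] at hw ⊢
    have hs : ¬[c + 1] <+: s := hw.not_prefix
    have hs' : ¬[c + 1, c] <+: s := fun h => hs ((List.prefix_append [c + 1] [c]).trans h)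
    rw [mulGen_cons_cons hc, mulGen_of_not_prefix hc₃ hs',
      mulGen_of_not_prefix hc₂ (by simpa [hcc] using hs)]
  · rw [mulGen_of_not_prefix hc h₁]
    by_cases h₂ : [c + 1] <+: w
    · obtain ⟨s, rfl⟩ := h₂
      simp only [List.cons_append, List.nil_append] at h₁ ⊢
      have hs : ¬[c, c + 1] <+: s := fun h =>
        (by simpa using h₁ : ¬[c] <+: s) ((List.prefix_append [c] [c + 1]).trans h)
      have e := mulGen_cons_cons hc₁ s
      rw [hcc] at e
      rw [e, mulGen_of_not_prefix hc₂ (by rwa [hcc])]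
    · rw [mulGen_of_not_prefix hc₁ (by simpa [hcc] using h₂), mulGen_cons_cons hc]

def unMulGen (g : Fin 2) (p : ℕ × List (Fin 2)) : ℕ × List (Fin 2) :=
  if [g + p.1] <+: p.2 then (p.1, p.2.tail) else (p.1 - 1, (g + p.1) :: (g + p.1 + 1) :: p.2)

theorem unMulGen_mulGen (g : Fin 2) {p : ℕ × List (Fin 2)} (hp : Reduced p.2) :
    unMulGen g (mulGen g p) = p := by
  obtain ⟨t, w⟩ := p
  by_cases h : [g + t + 1, g + t] <+: w
  · obtain ⟨s, rfl⟩ := h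
    simp only [List.cons_append, List.nil_append] at hp ⊢
    have hs : ¬[g + ((t + 1 : ℕ) : Fin 2)] <+: s := by
      push_cast; rw [← add_assoc]; exact hp.not_prefix
    have hcc : g + t + 1 + 1 = g + t := by omega
    rw [mulGen_cons_cons rfl, unMulGen, if_neg hs]
    simp only [Nat.add_sub_cancel, Nat.cast_succ, ← add_assoc, hcc]
  · rw [mulGen_of_not_prefix rfl h]
    simp [unMulGen]

def NormalForm : Type := {p : ℕ × List (Fin 2) // Reduced p.2}

namespace NormalForm

def mulGen (g : Fin 2) : Function.End NormalForm :=
  Subtype.map (B3.mulGen g) fun _ hp => hp.mulGen g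

theorem mulGen_braid : mulGen 0 * mulGen 1 * mulGen 0 = mulGen 1 * mulGen 0 * mulGen 1 := by
  funext ⟨⟨t, w⟩, hw⟩
  exact Subtype.ext ((B3.mulGen_braid 0 t hw).trans (B3.mulGen_braid 1 t hw).symm)

end NormalForm

def act : B3 →* Function.End NormalForm := lift NormalForm.mulGen NormalForm.mulGen_braid

theorem act_σ (g : Fin 2) (p : NormalForm) : (act (σ g) p).1 = mulGen g p.1 := by
  rw [act, lift_σ]
  rfl

theorem act_mul_apply (x y : B3) (p : NormalForm) : act (x * y) p = act x (act y p) := by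
  rw [map_mul]
  rfl

theorem eval_act (x : B3) (p : NormalForm) : eval (act x p).1 = x * eval p.1 := by
  induction x using induction_on with
  | one => rw [map_one, one_mul]; rfl
  | mul g y ih => rw [act_mul_apply, act_σ, eval_mulGen, ih, mul_assoc]

theorem act_injective (x : B3) : Function.Injective (act x) := by
  induction x using induction_on with
  | one => rw [map_one]; exact Function.injective_id
  | mul g y ih =>
    intro p q h
    simp only [act_mul_apply] at h
    refine ih (Subtype.ext ?_)
    rw [← unMulGen_mulGen g (act y p).2, ← unMulGen_mulGen g (act y q).2, ← act_σ, ← act_σ, h]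

instance : IsLeftCancelMul B3 where
  mul_left_cancel x u v h := by
    let e : NormalForm := ⟨(0, []), reduced_nil⟩
    have hx : act x (act u e) = act x (act v e) := by
      rw [← act_mul_apply, ← act_mul_apply]
      exact congrArg (act · e) h
    have := congrArg (fun p : NormalForm => eval p.1) (act_injective x hx)
    rw [eval_act, eval_act] at this
    simpa [eval, e] using this

instance : IsRightCancelMul B3 where
  mul_right_cancel x u v h := by
    rw [← unop_reverse_unop_reverse u, ← unop_reverse_unop_reverse v]
    congr 2
    refine mul_left_cancel (a := (reverse x).unop) ?_
    simpa using congrArg (fun y => (reverse y).unop) h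

end B3

/-- `B(3)⁺` is cancellative, homogeneous with respect to `{a, b}`, any two elements
admit a common right multiple, and each generator left- and right-divides the
fundamental element `Δ = aba`. -/
theorem stmt_16 :
    (∀ x u v : B3, (x * u = x * v → u = v) ∧ (u * x = v * x → u = v)) ∧
    (∃ l : B3 → ℕ, l (σ 0) = 1 ∧ l (σ 1) = 1 ∧
      ∀ x y : B3, l (x * y) = l x + l y) ∧
    (∀ u v : B3, ∃ p q : B3, p * u = q * v) ∧
    (∀ g : B3, g = σ 0 ∨ g = σ 1 →
      (∃ x : B3, σ 0 * σ 1 * σ 0 = g * x) ∧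
      (∃ x : B3, σ 0 * σ 1 * σ 0 = x * g)) := by
  refine ⟨fun x u v => ⟨mul_left_cancel, mul_right_cancel⟩,
    ⟨fun x => (B3.length x).toAdd, by simp, by simp, by simp⟩,
    B3.exists_mul_eq_mul, ?_⟩
  rintro g (rfl | rfl) <;> exact ⟨B3.exists_delta_eq_σ_mul _, B3.exists_delta_eq_mul_σ _⟩
end
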